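/- Let T ≥ 0, β < 1, γ > 0 with γ ≥ β, and let M : [T,∞) → ℝ be continuous such that the improper integral ∫_t^∞ M(s) ds converges for every t ≥ T. Define q₁(t) := M(t), Q_k(t) := −∫_t^∞ q_k(s) ds for k ≥ 1, and q_k(t) := Σ_{j=1}^{k−1} Q_j(t) Q_{k−j}(t) for k ≥ 2, assuming all these improper integrals converge, and set φ(t) := −∫_t^∞ Q₂(s) ds, assumed finite. Assume: (i) |∫_t^∞ Q₁(s) ds| ≤ 1 and φ(t) ≤ 6^{−4} for all t ≥ T; (ii) |M(t)| ≤ C(1+t)^{−2β}, |∫_t^∞ M(s) ds| ≤ C(1+t)^{−γ}, and ∫_t^∞ (∫_s^∞ M(σ) dσ)² ds ≤ C(1+t)^{−γ} for all t ≥ T and some constant C > 0. Define b(t) := −Σ_{k=1}^∞ Q_k(t), and assume b is continuously differentiable with b'(t) + b(t)² + M(t) = 0 on [T,∞). Then there exist positive constants b₀, b₁, b₂ such that for all t ≥ T: |∫_t^∞ b(s) ds| ≤ b₀, |b(t)| ≤ b₁(1+t)^{−γ}, and |b'(t)| ≤ b₂(1+t)^{−2β}. -/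

import Mathlib

/-!
Put `P = -Q₂ = ∫_t^∞ Q₁²`. It is nonnegative and nonincreasing, so `∫_t^∞ Q₂² ≤ φ(t) P(t)` and,
by AM-GM, `∫_t^∞ |Q₁ Q₂| ≤ √φ(t) P(t)`, where `√φ ≤ 6⁻² = ε / 2` for `ε = 1/18`.
Since `q_{n+3} = Σ_{i+j=n+1} Q_{i+1} Q_{j+1}` has the shape of Catalan's recursion, integrating
`Q_k = -∫_t^∞ q_k` inductively gives `|Q_{n+2}| ≤ catalan (n+1) εⁿ |Q₂|`; as `catalan n ≤ 4ⁿ`,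
`|b + Q₁| = |Σ_{k≥2} Q_k| ≤ 36/7 |Q₂| ≤ 36/7 C (1+t)^(-γ)`. This bounds `b`, and `∫ b` through
`|∫ Q₁| ≤ 1` and `∫_t^∞ |Q₂| = φ`; then `b' = -b² - M` and `γ ≥ β` bound `b'`.
-/

open MeasureTheory Filter Topology
open Finset.HasAntidiagonal (antidiagonal mem_antidiagonal)

lemma catalan_le_four_pow (n : ℕ) : catalan n ≤ 4 ^ n :=
  calc catalan n ≤ (n + 1) * catalan n := Nat.le_mul_of_pos_left _ n.succ_pos
    _ = (2 * n).choose n := succ_mul_catalan_eq_centralBinom n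
    _ ≤ (2 * n + 1).choose n := Nat.choose_le_choose n (Nat.le_succ _)
    _ ≤ 4 ^ n := Nat.choose_middle_le_pow n

lemma catalan_succ_mul_pow_le {ε : ℝ} (hε : 0 ≤ ε) (n : ℕ) :
    catalan (n + 1) * ε ^ n ≤ 4 * (4 * ε) ^ n := by
  have : (catalan (n + 1) : ℝ) ≤ 4 ^ (n + 1) := by exact_mod_cast catalan_le_four_pow (n + 1)
  calc catalan (n + 1) * ε ^ n ≤ 4 ^ (n + 1) * ε ^ n := by gcongr
    _ = 4 * (4 * ε) ^ n := by ring

lemma sum_Ico_one_eq_sum_antidiagonal {M : Type*} [AddCommMonoid M] (f : ℕ → ℕ → M) (m : ℕ) :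
    ∑ j ∈ Finset.Ico 1 (m + 2), f j (m + 2 - j) =
      ∑ p ∈ antidiagonal m, f (p.1 + 1) (p.2 + 1) := by
  rw [Finset.sum_Ico_eq_sum_range,
    Finset.Nat.sum_antidiagonal_eq_sum_range_succ fun i j => f (i + 1) (j + 1)]
  refine Finset.sum_congr (by simp) fun i hi => ?_
  rw [Finset.mem_range] at hi
  rw [add_comm 1 i]
  congr 1
  omega

section CatalanMajorant

variable {x : ℕ → ℝ} {ε r : ℝ} {n : ℕ}

lemma abs_mul_le_catalan_mul_pow (hε : 0 ≤ ε)
    (hx : ∀ m ≤ n, |x (m + 1)| ≤ catalan (m + 1) * ε ^ m * |x 1|)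
    (h01 : |x 0| * |x 1| ≤ ε * r) (h11 : x 1 ^ 2 ≤ ε ^ 2 * r)
    {i j : ℕ} (hij : i + j = n + 1) :
    |x i * x j| ≤ catalan i * catalan j * ε ^ (n + 1) * r := by
  have h0 : |x 0 * x (n + 1)| ≤ catalan 0 * catalan (n + 1) * ε ^ (n + 1) * r :=
    calc |x 0 * x (n + 1)| ≤ |x 0| * (catalan (n + 1) * ε ^ n * |x 1|) := by
          rw [abs_mul]; gcongr; exact hx n le_rfl
      _ = catalan (n + 1) * ε ^ n * (|x 0| * |x 1|) := by ring
      _ ≤ catalan (n + 1) * ε ^ n * (ε * r) := by gcongr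
      _ = catalan 0 * catalan (n + 1) * ε ^ (n + 1) * r := by rw [catalan_zero]; ring
  rcases i with _ | i
  · obtain rfl : j = n + 1 := by omega
    exact h0
  rcases j with _ | j
  · obtain rfl : i = n := by omega
    rw [mul_comm (x _), mul_comm (catalan _ : ℝ)]
    exact h0
  calc |x (i + 1) * x (j + 1)|
      ≤ (catalan (i + 1) * ε ^ i * |x 1|) * (catalan (j + 1) * ε ^ j * |x 1|) := by
        rw [abs_mul]; gcongr <;> [exact hx i (by omega); exact hx j (by omega)]
    _ = catalan (i + 1) * catalan (j + 1) * ε ^ (i + j) * x 1 ^ 2 := by rw [← sq_abs (x 1)]; ring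
    _ ≤ catalan (i + 1) * catalan (j + 1) * ε ^ (i + j) * (ε ^ 2 * r) := by gcongr
    _ = catalan (i + 1) * catalan (j + 1) * ε ^ (n + 1) * r := by
        rw [show n + 1 = i + j + 2 by omega]; ring

lemma abs_sum_antidiagonal_le_catalan_mul_pow (hε : 0 ≤ ε)
    (hx : ∀ m ≤ n, |x (m + 1)| ≤ catalan (m + 1) * ε ^ m * |x 1|)
    (h01 : |x 0| * |x 1| ≤ ε * r) (h11 : x 1 ^ 2 ≤ ε ^ 2 * r) :
    |∑ p ∈ antidiagonal (n + 1), x p.1 * x p.2| ≤ catalan (n + 2) * ε ^ (n + 1) * r :=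
  calc |∑ p ∈ antidiagonal (n + 1), x p.1 * x p.2|
      ≤ ∑ p ∈ antidiagonal (n + 1), (catalan p.1 * catalan p.2 : ℝ) * (ε ^ (n + 1) * r) := by
        refine (Finset.abs_sum_le_sum_abs _ _).trans (Finset.sum_le_sum fun p hp => ?_)
        rw [← mul_assoc]
        exact abs_mul_le_catalan_mul_pow hε hx h01 h11 (mem_antidiagonal.mp hp)
    _ = catalan (n + 2) * ε ^ (n + 1) * r := by
        rw [← Finset.sum_mul, catalan_succ' (n + 1)]; push_cast; ring

lemma abs_sub_le_of_hasSum_of_abs_le_catalan {S a : ℝ} (hε : 0 ≤ ε)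
    (hε4 : 4 * ε < 1) (hS : HasSum x S)
    (hx : ∀ n, |x (n + 1)| ≤ catalan (n + 1) * ε ^ n * a) :
    |S - x 0| ≤ 4 / (1 - 4 * ε) * a := by
  have ha : 0 ≤ a := by simpa using (abs_nonneg _).trans (hx 0)
  have htail : HasSum (fun n => x (n + 1)) (S - x 0) := by
    simpa using (hasSum_nat_add_iff' 1).mpr hS
  have hgeom : HasSum (fun n => 4 * (4 * ε) ^ n * a) (4 / (1 - 4 * ε) * a) := by
    simpa [div_eq_mul_inv] using
      ((hasSum_geometric_of_lt_one (by positivity) hε4).mul_left 4).mul_right a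
  rw [← htail.tsum_eq]
  exact tsum_of_norm_bounded (f := fun n => x (n + 1)) hgeom fun n =>
    (hx n).trans (mul_le_mul_of_nonneg_right (catalan_succ_mul_pow_le hε n) ha)

end CatalanMajorant

section ImproperIntegral

variable {f g h F : ℝ → ℝ} {T t L : ℝ}

lemma ContinuousOn.intervalIntegrable_of_Ici (hf : ContinuousOn f (Set.Ici T)) {a b : ℝ}
    (ha : T ≤ a) (hb : T ≤ b) : IntervalIntegrable f volume a b :=
  (hf.mono fun _ hx => (le_min ha hb).trans hx.1).intervalIntegrable

lemma ContinuousOn.aestronglyMeasurable_Ioi (hf : ContinuousOn f (Set.Ici T)) (ht : T ≤ t) :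
    AEStronglyMeasurable f (volume.restrict (Set.Ioi t)) :=
  (hf.mono fun _ hx => ht.trans (le_of_lt hx)).aestronglyMeasurable measurableSet_Ioi

lemma ContinuousOn.continuousOn_primitive_Ici (hf : ContinuousOn f (Set.Ici T)) :
    ContinuousOn (fun x => ∫ s in T..x, f s) (Set.Ici T) := by
  intro x hx
  have hIcc : Set.uIcc T (x + 1) = Set.Ici T ∩ Set.Iic (x + 1) := by
    rw [Set.uIcc_of_le (by linarith [Set.mem_Ici.mp hx]), Set.Ici_inter_Iic]
  have hcont : ContinuousOn f (Set.uIcc T (x + 1)) := hf.mono (hIcc ▸ Set.inter_subset_left)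
  refine (intervalIntegral.continuousOn_primitive_interval
    (hcont.integrableOn_compact isCompact_uIcc) x ?_).mono_of_mem_nhdsWithin ?_
  · rw [hIcc]; exact ⟨hx, by simp⟩
  · rw [hIcc]; exact inter_mem_nhdsWithin _ (Iic_mem_nhds (by linarith))

lemma continuousOn_of_tendsto_intervalIntegral (hf : ContinuousOn f (Set.Ici T))
    (hF : ∀ t ≥ T, Tendsto (fun R => ∫ s in t..R, f s) atTop (𝓝 (F t))) :
    ContinuousOn F (Set.Ici T) := by
  have hFeq : ∀ t ≥ T, F t = F T - ∫ s in T..t, f s := by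
    intro t ht
    have hsplit : ∀ᶠ R in atTop, (∫ s in T..t, f s) + ∫ s in t..R, f s = ∫ s in T..R, f s := by
      filter_upwards [eventually_ge_atTop t] with R hR
      exact intervalIntegral.integral_add_adjacent_intervals
        (hf.intervalIntegrable_of_Ici le_rfl ht) (hf.intervalIntegrable_of_Ici ht (ht.trans hR))
    have := tendsto_nhds_unique (((hF t ht).const_add _).congr' hsplit) (hF T le_rfl)
    linarith
  exact (continuousOn_const.sub hf.continuousOn_primitive_Ici).congr hFeq

lemma eq_setIntegral_Ioi_of_tendsto (hL : Tendsto (fun R => ∫ s in t..R, f s) atTop (𝓝 L))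
    (hf : IntegrableOn f (Set.Ioi t)) : L = ∫ s in Set.Ioi t, f s :=
  tendsto_nhds_unique hL (intervalIntegral_tendsto_integral_Ioi t hf tendsto_id)

lemma integrableOn_Ioi_of_tendsto_of_nonneg (hf : ContinuousOn f (Set.Ici t))
    (hf0 : ∀ s ≥ t, 0 ≤ f s) (hL : Tendsto (fun R => ∫ s in t..R, f s) atTop (𝓝 L)) :
    IntegrableOn f (Set.Ioi t) := by
  refine integrableOn_Ioi_of_intervalIntegral_norm_tendsto L t
    (fun R => ?_) tendsto_id (hL.congr' ?_)
  · rcases le_total R t with hR | hR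
    · simp [Set.Ioc_eq_empty_of_le hR]
    · exact (hf.intervalIntegrable_of_Ici le_rfl hR).1
  · filter_upwards [eventually_ge_atTop t] with R hR
    refine intervalIntegral.integral_congr fun s hs => ?_
    rw [Set.uIcc_of_le hR] at hs
    exact (Real.norm_of_nonneg (hf0 s hs.1)).symm

lemma abs_le_setIntegral_of_tendsto (hL : Tendsto (fun R => ∫ s in t..R, f s) atTop (𝓝 L))
    (hf : AEStronglyMeasurable f (volume.restrict (Set.Ioi t))) (hg : IntegrableOn g (Set.Ioi t))
    (hfg : ∀ s > t, |f s| ≤ g s) : |L| ≤ ∫ s in Set.Ioi t, g s := by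
  have hfg' : ∀ᵐ s ∂(volume.restrict (Set.Ioi t)), ‖f s‖ ≤ g s :=
    ae_restrict_of_forall_mem measurableSet_Ioi hfg
  rw [eq_setIntegral_Ioi_of_tendsto hL (hg.mono' hf hfg')]
  exact norm_integral_le_of_norm_le hg hfg'

lemma exists_tendsto_intervalIntegral_of_abs_sub_le (hf : ContinuousOn f (Set.Ici t))
    (hg : ContinuousOn g (Set.Ici t)) (hgL : Tendsto (fun R => ∫ s in t..R, g s) atTop (𝓝 L))
    (hh : IntegrableOn h (Set.Ioi t)) (hfg : ∀ s > t, |f s - g s| ≤ h s) :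
    ∃ L', Tendsto (fun R => ∫ s in t..R, f s) atTop (𝓝 L') ∧
      |L'| ≤ |L| + ∫ s in Set.Ioi t, h s := by
  have hfg' : ∀ᵐ s ∂(volume.restrict (Set.Ioi t)), ‖f s - g s‖ ≤ h s :=
    ae_restrict_of_forall_mem measurableSet_Ioi hfg
  have hd : IntegrableOn (fun s => f s - g s) (Set.Ioi t) :=
    hh.mono' ((hf.sub hg).aestronglyMeasurable_Ioi le_rfl) hfg'
  refine ⟨L + ∫ s in Set.Ioi t, (f s - g s), ?_, ?_⟩
  · refine (hgL.add (intervalIntegral_tendsto_integral_Ioi t hd tendsto_id)).congr' ?_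
    filter_upwards [eventually_ge_atTop t] with R hR
    rw [id, intervalIntegral.integral_sub (hf.intervalIntegrable_of_Ici le_rfl hR)
      (hg.intervalIntegrable_of_Ici le_rfl hR)]
    ring
  · exact (abs_add_le _ _).trans (add_le_add_right (norm_integral_le_of_norm_le hh hfg') _)

lemma integrable_and_integral_le_of_lintegral_le {α : Type*} [MeasurableSpace α] {μ : Measure α}
    {u : α → ℝ} {c : ℝ} (hu : AEStronglyMeasurable u μ) (hu0 : ∀ x, 0 ≤ u x) (hc : 0 ≤ c)
    (h : ∫⁻ x, ENNReal.ofReal (u x) ∂μ ≤ ENNReal.ofReal c) :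
    Integrable u μ ∧ ∫ x, u x ∂μ ≤ c := by
  refine ⟨⟨hu, (hasFiniteIntegral_iff_ofReal (ae_of_all _ hu0)).mpr
    (h.trans_lt ENNReal.ofReal_lt_top)⟩, ?_⟩
  rw [integral_eq_lintegral_of_nonneg_ae (ae_of_all _ hu0) hu]
  exact ENNReal.toReal_le_of_le_ofReal hc h

end ImproperIntegral

section TailIntegrals

variable {f g : ℝ → ℝ} {t : ℝ}

lemma abs_mul_abs_le_mul_sq_add_inv_mul_sq {δ : ℝ} (hδ : 0 < δ) (x y : ℝ) :
    |x| * |y| ≤ δ / 2 * x ^ 2 + (2 * δ)⁻¹ * y ^ 2 := by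
  have key : 2 * δ * (|x| * |y|) ≤ δ ^ 2 * x ^ 2 + y ^ 2 := by
    nlinarith [sq_nonneg (δ * |x| - |y|), sq_abs x, sq_abs y]
  rw [← mul_le_mul_iff_of_pos_left (by positivity : 0 < 2 * δ)]
  field_simp
  linarith

lemma integrableOn_sq_and_setIntegral_sq_le (hg : IntegrableOn g (Set.Ioi t))
    (hle : ∀ s > t, |g s| ≤ |g t|) :
    IntegrableOn (fun s => g s ^ 2) (Set.Ioi t) ∧
      ∫ s in Set.Ioi t, g s ^ 2 ≤ |g t| * ∫ s in Set.Ioi t, |g s| := by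
  have hpt : ∀ s > t, g s ^ 2 ≤ |g t| * |g s| := fun s hs => by
    rw [← sq_abs, sq]; exact mul_le_mul_of_nonneg_right (hle s hs) (abs_nonneg _)
  have hmaj : IntegrableOn (fun s => |g t| * |g s|) (Set.Ioi t) := hg.abs.const_mul _
  have hint : IntegrableOn (fun s => g s ^ 2) (Set.Ioi t) :=
    hmaj.mono' (hg.aestronglyMeasurable.pow 2) (ae_restrict_of_forall_mem measurableSet_Ioi
      fun s hs => by rw [Real.norm_of_nonneg (sq_nonneg _)]; exact hpt s hs)
  refine ⟨hint, ?_⟩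
  rw [← integral_const_mul]
  exact setIntegral_mono_on hint hmaj measurableSet_Ioi hpt

lemma integrableOn_abs_mul_and_setIntegral_le {a δ : ℝ} (hδ : 0 < δ)
    (hf : AEStronglyMeasurable f (volume.restrict (Set.Ioi t)))
    (hg : AEStronglyMeasurable g (volume.restrict (Set.Ioi t)))
    (hf2 : IntegrableOn (fun s => f s ^ 2) (Set.Ioi t))
    (hg2 : IntegrableOn (fun s => g s ^ 2) (Set.Ioi t))
    (hf2a : ∫ s in Set.Ioi t, f s ^ 2 ≤ a) (hg2a : ∫ s in Set.Ioi t, g s ^ 2 ≤ δ ^ 2 * a) :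
    IntegrableOn (fun s => |f s| * |g s|) (Set.Ioi t) ∧
      ∫ s in Set.Ioi t, |f s| * |g s| ≤ δ * a := by
  have hmaj : IntegrableOn (fun s => δ / 2 * f s ^ 2 + (2 * δ)⁻¹ * g s ^ 2) (Set.Ioi t) :=
    (hf2.const_mul _).add (hg2.const_mul _)
  have hint : IntegrableOn (fun s => |f s| * |g s|) (Set.Ioi t) :=
    hmaj.mono' (hf.norm.mul hg.norm) (ae_of_all _ fun s => by
      rw [Real.norm_of_nonneg (by positivity)]; exact abs_mul_abs_le_mul_sq_add_inv_mul_sq hδ _ _)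
  refine ⟨hint, ?_⟩
  calc ∫ s in Set.Ioi t, |f s| * |g s|
      ≤ ∫ s in Set.Ioi t, (δ / 2 * f s ^ 2 + (2 * δ)⁻¹ * g s ^ 2) :=
        integral_mono hint hmaj fun s => abs_mul_abs_le_mul_sq_add_inv_mul_sq hδ _ _
    _ = δ / 2 * (∫ s in Set.Ioi t, f s ^ 2) + (2 * δ)⁻¹ * ∫ s in Set.Ioi t, g s ^ 2 := by
        rw [integral_add (hf2.const_mul _) (hg2.const_mul _), integral_const_mul,
          integral_const_mul]
    _ ≤ δ / 2 * a + (2 * δ)⁻¹ * (δ ^ 2 * a) := by gcongr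
    _ = δ * a := by field_simp; ring

lemma integrableOn_and_setIntegral_abs_mul_div_add_sq_div_le {ε : ℝ} (hε : 0 < ε)
    (hf : AEStronglyMeasurable f (volume.restrict (Set.Ioi t)))
    (hf2 : ∀ s ≥ t, IntegrableOn (fun x => f x ^ 2) (Set.Ioi s))
    (hgf : ∀ s ≥ t, |g s| = ∫ x in Set.Ioi s, f x ^ 2) (hg : IntegrableOn g (Set.Ioi t))
    (hgε : ∫ s in Set.Ioi t, |g s| ≤ (ε / 2) ^ 2) :
    IntegrableOn (fun s => |f s| * |g s| / ε + g s ^ 2 / ε ^ 2) (Set.Ioi t) ∧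
      ∫ s in Set.Ioi t, (|f s| * |g s| / ε + g s ^ 2 / ε ^ 2) ≤ |g t| := by
  have hmono : ∀ s > t, |g s| ≤ |g t| := fun s hs => by
    rw [hgf s hs.le, hgf t le_rfl]
    exact setIntegral_mono_set (hf2 t le_rfl) (ae_of_all _ fun _ => sq_nonneg _)
      (Set.Ioi_subset_Ioi hs.le).eventuallyLE
  obtain ⟨hg2, hg2le⟩ := integrableOn_sq_and_setIntegral_sq_le hg hmono
  have hg2ε : ∫ s in Set.Ioi t, g s ^ 2 ≤ (ε / 2) ^ 2 * |g t| :=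
    hg2le.trans (by rw [mul_comm]; gcongr)
  obtain ⟨hfg, hfgle⟩ := integrableOn_abs_mul_and_setIntegral_le (half_pos hε)
    hf hg.aestronglyMeasurable (hf2 t le_rfl) hg2 (hgf t le_rfl).ge hg2ε
  refine ⟨(hfg.div_const ε).add (hg2.div_const _), ?_⟩
  rw [integral_add (hfg.div_const ε) (hg2.div_const _), integral_div, integral_div]
  calc (∫ s in Set.Ioi t, |f s| * |g s|) / ε + (∫ s in Set.Ioi t, g s ^ 2) / ε ^ 2
      ≤ ε / 2 * |g t| / ε + (ε / 2) ^ 2 * |g t| / ε ^ 2 := by gcongr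
    _ = 3 / 4 * |g t| := by field_simp; ring
    _ ≤ |g t| := by linarith [abs_nonneg (g t)]

end TailIntegrals

section Riccati

variable {T : ℝ} {q Q : ℕ → ℝ → ℝ}

lemma continuousOn_q_and_Q {M : ℝ → ℝ} (hMc : ContinuousOn M (Set.Ici T))
    (hq1 : ∀ t, q 1 t = M t)
    (hqk : ∀ k, 2 ≤ k → ∀ t, q k t = ∑ j ∈ Finset.Ico 1 k, Q j t * Q (k - j) t)
    (hQ : ∀ k, 1 ≤ k → ∀ t ≥ T,
      Tendsto (fun R => ∫ s in t..R, q k s) atTop (𝓝 (-(Q k t)))) :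
    ∀ k, 1 ≤ k → ContinuousOn (q k) (Set.Ici T) ∧ ContinuousOn (Q k) (Set.Ici T) := by
  intro k
  induction k using Nat.strong_induction_on with
  | _ k ih =>
    intro hk
    have hqc : ContinuousOn (q k) (Set.Ici T) := by
      rcases hk.eq_or_lt with rfl | hk2
      · exact hMc.congr fun t _ => hq1 t
      · refine (continuousOn_finsetSum _ fun j hj => ?_).congr fun t _ => hqk k hk2 t
        rw [Finset.mem_Ico] at hj
        exact (ih j (by omega) hj.1).2.mul (ih (k - j) (by omega) (by omega)).2
    have hQc : ContinuousOn (fun t => -Q k t) (Set.Ici T) :=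
      continuousOn_of_tendsto_intervalIntegral hqc (hQ k hk)
    exact ⟨hqc, hQc.neg.congr fun t _ => (neg_neg _).symm⟩

lemma abs_Q_le_catalan_mul_pow {ε : ℝ} (hε : 0 < ε)
    (hqk : ∀ k, 2 ≤ k → ∀ t, q k t = ∑ j ∈ Finset.Ico 1 k, Q j t * Q (k - j) t)
    (hQ : ∀ k, 1 ≤ k → ∀ t ≥ T,
      Tendsto (fun R => ∫ s in t..R, q k s) atTop (𝓝 (-(Q k t))))
    (hqc : ∀ k, 1 ≤ k → ContinuousOn (q k) (Set.Ici T))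
    (hρ : ∀ t ≥ T,
      IntegrableOn (fun s => |Q 1 s| * |Q 2 s| / ε + Q 2 s ^ 2 / ε ^ 2) (Set.Ioi t) ∧
        ∫ s in Set.Ioi t, (|Q 1 s| * |Q 2 s| / ε + Q 2 s ^ 2 / ε ^ 2) ≤ |Q 2 t|)
    (n : ℕ) : ∀ t ≥ T, |Q (n + 2) t| ≤ catalan (n + 1) * ε ^ n * |Q 2 t| := by
  -- In `q_{n+3}` the two products involving `Q₁` are controlled by `|Q₁ Q₂|`, all others by `Q₂²`.
  set ρ : ℝ → ℝ := fun s => |Q 1 s| * |Q 2 s| / ε + Q 2 s ^ 2 / ε ^ 2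
  have hρ1 : ∀ s, |Q 1 s| * |Q 2 s| ≤ ε * ρ s := fun s => by
    simp only [ρ]; field_simp; linarith [sq_nonneg (Q 2 s)]
  have hρ2 : ∀ s, Q 2 s ^ 2 ≤ ε ^ 2 * ρ s := fun s => by
    have : 0 ≤ ε * (|Q 1 s| * |Q 2 s|) := by positivity
    simp only [ρ]; field_simp; linarith
  induction n using Nat.strong_induction_on with
  | _ n ih =>
    intro t ht
    rcases n with _ | n
    · simp
    have hpt : ∀ s > t, |q (n + 1 + 2) s| ≤ catalan (n + 2) * ε ^ (n + 1) * ρ s := by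
      intro s hs
      rw [hqk _ (by omega) s, sum_Ico_one_eq_sum_antidiagonal (fun i j => Q i s * Q j s)]
      exact abs_sum_antidiagonal_le_catalan_mul_pow (x := fun m => Q (m + 1) s) hε.le
        (fun m hm => ih m (by omega) s (ht.trans hs.le)) (hρ1 s) (hρ2 s)
    have hbound := abs_le_setIntegral_of_tendsto (hQ _ (by omega) t ht)
      ((hqc _ (by omega)).aestronglyMeasurable_Ioi ht) ((hρ t ht).1.const_mul _) hpt
    rw [abs_neg, integral_const_mul] at hbound
    exact hbound.trans (mul_le_mul_of_nonneg_left (hρ t ht).2 (by positivity))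

lemma Q_two_nonpos_and_abs_eq
    (hqk : ∀ k, 2 ≤ k → ∀ t, q k t = ∑ j ∈ Finset.Ico 1 k, Q j t * Q (k - j) t)
    (hQ : ∀ k, 1 ≤ k → ∀ t ≥ T,
      Tendsto (fun R => ∫ s in t..R, q k s) atTop (𝓝 (-(Q k t))))
    (hsq : ∀ t ≥ T, IntegrableOn (fun s => Q 1 s ^ 2) (Set.Ioi t)) :
    ∀ t ≥ T, Q 2 t ≤ 0 ∧ |Q 2 t| = ∫ s in Set.Ioi t, Q 1 s ^ 2 := by
  have hq2 : q 2 = fun s => Q 1 s ^ 2 := funext fun s => by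
    rw [hqk 2 le_rfl s]; simp [sq]
  intro t ht
  have hQ2 : -Q 2 t = ∫ s in Set.Ioi t, Q 1 s ^ 2 :=
    eq_setIntegral_Ioi_of_tendsto (hq2 ▸ hQ 2 one_le_two t ht) (hsq t ht)
  have hnonneg : 0 ≤ ∫ s in Set.Ioi t, Q 1 s ^ 2 :=
    setIntegral_nonneg measurableSet_Ioi fun _ _ => sq_nonneg _
  exact ⟨by linarith, by rw [abs_of_nonpos (by linarith), hQ2]⟩

lemma integrableOn_Q_two_and_setIntegral_abs_eq {φ : ℝ → ℝ}
    (hQ2c : ContinuousOn (Q 2) (Set.Ici T)) (hQ2 : ∀ t ≥ T, Q 2 t ≤ 0)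
    (hφ : ∀ t ≥ T, Tendsto (fun R => ∫ s in t..R, Q 2 s) atTop (𝓝 (-(φ t)))) :
    ∀ t ≥ T, IntegrableOn (Q 2) (Set.Ioi t) ∧ ∫ s in Set.Ioi t, |Q 2 s| = φ t := by
  intro t ht
  have hlim : Tendsto (fun R => ∫ s in t..R, -Q 2 s) atTop (𝓝 (φ t)) := by
    simpa only [intervalIntegral.integral_neg, neg_neg] using (hφ t ht).neg
  have hint : IntegrableOn (fun s => -Q 2 s) (Set.Ioi t) :=
    integrableOn_Ioi_of_tendsto_of_nonneg (hQ2c.neg.mono (Set.Ici_subset_Ici.mpr ht))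
      (fun s hs => neg_nonneg.mpr (hQ2 s (ht.trans hs))) hlim
  refine ⟨by simpa using hint.neg, ?_⟩
  rw [eq_setIntegral_Ioi_of_tendsto hlim hint]
  exact setIntegral_congr_fun measurableSet_Ioi fun s hs =>
    abs_of_nonpos (hQ2 s (ht.trans (le_of_lt hs)))

lemma abs_add_Q_one_le_of_hasSum
    (hqk : ∀ k, 2 ≤ k → ∀ t, q k t = ∑ j ∈ Finset.Ico 1 k, Q j t * Q (k - j) t)
    (hQ : ∀ k, 1 ≤ k → ∀ t ≥ T,
      Tendsto (fun R => ∫ s in t..R, q k s) atTop (𝓝 (-(Q k t))))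
    (hqc : ∀ k, 1 ≤ k → ContinuousOn (q k) (Set.Ici T))
    (hQ1c : ContinuousOn (Q 1) (Set.Ici T))
    (hsq : ∀ t ≥ T, IntegrableOn (fun s => Q 1 s ^ 2) (Set.Ioi t))
    (hQ2 : ∀ t ≥ T, |Q 2 t| = ∫ s in Set.Ioi t, Q 1 s ^ 2)
    (hQ2i : ∀ t ≥ T, IntegrableOn (Q 2) (Set.Ioi t))
    (hQ2φ : ∀ t ≥ T, ∫ s in Set.Ioi t, |Q 2 s| ≤ 1 / 6 ^ 4)
    {t S : ℝ} (ht : T ≤ t) (hS : HasSum (fun k => Q (k + 1) t) (-S)) :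
    |S + Q 1 t| ≤ 36 / 7 * |Q 2 t| := by
  have hQn := abs_Q_le_catalan_mul_pow (ε := 1 / 18) (by norm_num) hqk hQ hqc fun t ht =>
    integrableOn_and_setIntegral_abs_mul_div_add_sq_div_le (by norm_num)
      (hQ1c.aestronglyMeasurable_Ioi ht) (fun s hs => hsq s (ht.trans hs))
      (fun s hs => hQ2 s (ht.trans hs)) (hQ2i t ht) ((hQ2φ t ht).trans (by norm_num))
  have := abs_sub_le_of_hasSum_of_abs_le_catalan (by norm_num) (by norm_num) hS
    fun n => hQn n t ht
  rw [← abs_neg, neg_add']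
  norm_num at this ⊢
  exact this

end Riccati

lemma abs_le_of_riccati {x b b' m B C β γ : ℝ} (hx : 1 ≤ x) (hβγ : β ≤ γ)
    (hb : |b| ≤ B * x ^ (-γ)) (hm : |m| ≤ C * x ^ (-(2 * β))) (hric : b' + b ^ 2 + m = 0) :
    |b'| ≤ (B ^ 2 + C) * x ^ (-(2 * β)) := by
  have hb2 : b ^ 2 ≤ B ^ 2 * x ^ (-(2 * β)) :=
    calc b ^ 2 = |b| ^ 2 := (sq_abs b).symm
      _ ≤ (B * x ^ (-γ)) ^ 2 := pow_le_pow_left₀ (abs_nonneg b) hb 2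
      _ = B ^ 2 * x ^ (-γ * 2) := by
          rw [mul_pow, ← Real.rpow_mul_natCast (by linarith)]; norm_cast
      _ ≤ B ^ 2 * x ^ (-(2 * β)) := by
          gcongr
          linarith
  rw [show b' = -(b ^ 2 + m) by linarith, abs_neg]
  calc |b ^ 2 + m| ≤ b ^ 2 + |m| := (abs_add_le _ _).trans (by rw [abs_sq])
    _ ≤ (B ^ 2 + C) * x ^ (-(2 * β)) := by linarith

theorem b_estimates_general
    (T : ℝ) (hT : 0 ≤ T)
    (β γ : ℝ) (hγβ : β ≤ γ)
    (M : ℝ → ℝ) (hMc : ContinuousOn M (Set.Ici T))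
    (q Q : ℕ → ℝ → ℝ)
    (hq1 : ∀ t, q 1 t = M t)
    (hqk : ∀ k, 2 ≤ k → ∀ t, q k t = ∑ j ∈ Finset.Ico 1 k, Q j t * Q (k - j) t)
    -- `Q k t = -∫_t^∞ q k`, all these improper integrals being convergent
    (hQ : ∀ k, 1 ≤ k → ∀ t ≥ T,
      Tendsto (fun R => ∫ s in t..R, q k s) atTop (𝓝 (-(Q k t))))
    -- `φ t = -∫_t^∞ Q₂`, assumed finite
    (φ : ℝ → ℝ)
    (hφ : ∀ t ≥ T,
      Tendsto (fun R => ∫ s in t..R, Q 2 s) atTop (𝓝 (-(φ t))))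
    -- (i): `|∫_t^∞ Q₁| ≤ 1` and `φ(t) ≤ 6⁻⁴` on `[T,∞)`
    (IQ1 : ℝ → ℝ)
    (hIQ1 : ∀ t ≥ T,
      Tendsto (fun R => ∫ s in t..R, Q 1 s) atTop (𝓝 (IQ1 t)))
    (hIQ1bd : ∀ t ≥ T, |IQ1 t| ≤ 1)
    (hφbd : ∀ t ≥ T, φ t ≤ 1 / 6 ^ 4)
    -- (ii): decay conditions on `M`, `∫_t^∞ M = -Q₁` and `∫_t^∞ (∫_s^∞ M)²`
    (C : ℝ) (hC : 0 < C)
    (hM2 : ∀ t ≥ T, |M t| ≤ C * (1 + t) ^ (-(2 * β)))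
    (hM3a : ∀ t ≥ T, |Q 1 t| ≤ C * (1 + t) ^ (-γ))
    (hM3b : ∀ t ≥ T,
      ∫⁻ s in Set.Ioi t, ENNReal.ofReal (Q 1 s ^ 2)
        ≤ ENNReal.ofReal (C * (1 + t) ^ (-γ)))
    -- `b = -Σ_{k=1}^∞ Q_k`, continuously differentiable and solving the Riccati equation
    (b b' : ℝ → ℝ)
    (hbsum : ∀ t ≥ T, HasSum (fun k : ℕ => Q (k + 1) t) (-(b t)))
    (hbd : ∀ t ∈ Set.Ici T, HasDerivWithinAt b (b' t) (Set.Ici T) t)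
    (hric : ∀ t ≥ T, b' t + b t ^ 2 + M t = 0) :
    ∃ b₀ > (0:ℝ), ∃ b₁ > (0:ℝ), ∃ b₂ > (0:ℝ), ∀ t ≥ T,
      (∃ L : ℝ, Tendsto (fun R => ∫ s in t..R, b s) atTop (𝓝 L) ∧ |L| ≤ b₀) ∧
      |b t| ≤ b₁ * (1 + t) ^ (-γ) ∧
      |b' t| ≤ b₂ * (1 + t) ^ (-(2 * β)) := by
  have hpos : ∀ t ≥ T, 0 ≤ C * (1 + t) ^ (-γ) := fun t ht =>
    mul_nonneg hC.le (Real.rpow_nonneg (by linarith) _)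
  have hQc := continuousOn_q_and_Q hMc hq1 hqk hQ
  have hQ1sq : ∀ t ≥ T, IntegrableOn (fun s => Q 1 s ^ 2) (Set.Ioi t) ∧
      ∫ s in Set.Ioi t, Q 1 s ^ 2 ≤ C * (1 + t) ^ (-γ) := fun t ht =>
    integrable_and_integral_le_of_lintegral_le
      (((hQc 1 le_rfl).2.pow 2).aestronglyMeasurable_Ioi ht) (fun _ => sq_nonneg _)
      (hpos t ht) (hM3b t ht)
  have hQ2 := Q_two_nonpos_and_abs_eq hqk hQ fun t ht => (hQ1sq t ht).1
  have hQ2φ := integrableOn_Q_two_and_setIntegral_abs_eq (hQc 2 one_le_two).2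
    (fun t ht => (hQ2 t ht).1) hφ
  have hr : ∀ t ≥ T, |b t + Q 1 t| ≤ 36 / 7 * |Q 2 t| := fun t ht =>
    abs_add_Q_one_le_of_hasSum hqk hQ (fun k hk => (hQc k hk).1) (hQc 1 le_rfl).2
      (fun t ht => (hQ1sq t ht).1) (fun t ht => (hQ2 t ht).2) (fun t ht => (hQ2φ t ht).1)
      (fun t ht => (hQ2φ t ht).2 ▸ hφbd t ht) ht (hbsum t ht)
  have hb : ∀ t ≥ T, |b t| ≤ 7 * C * (1 + t) ^ (-γ) := fun t ht => by
    have := abs_sub (b t + Q 1 t) (Q 1 t)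
    rw [add_sub_cancel_right] at this
    linarith [hr t ht, hM3a t ht, (hQ2 t ht).2 ▸ (hQ1sq t ht).2, hpos t ht]
  have hbc : ContinuousOn b (Set.Ici T) := fun t ht => (hbd t ht).continuousWithinAt
  refine ⟨2, two_pos, 7 * C, by positivity, (7 * C) ^ 2 + C, by positivity,
    fun t ht => ⟨?_, hb t ht, abs_le_of_riccati (by linarith) hγβ (hb t ht) (hM2 t ht) (hric t ht)⟩⟩
  have hsub : Set.Ici t ⊆ Set.Ici T := Set.Ici_subset_Ici.mpr ht
  obtain ⟨L, hL, hLle⟩ := exists_tendsto_intervalIntegral_of_abs_sub_le (g := fun s => -Q 1 s)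
    (hbc.mono hsub) ((hQc 1 le_rfl).2.neg.mono hsub)
    (by simpa only [intervalIntegral.integral_neg] using (hIQ1 t ht).neg)
    ((hQ2φ t ht).1.abs.const_mul (36 / 7)) fun s hs => by
      rw [sub_neg_eq_add]; exact hr s (ht.trans hs.le)
  rw [abs_neg, integral_const_mul, (hQ2φ t ht).2] at hLle
  exact ⟨L, hL, by linarith [hIQ1bd t ht, hφbd t ht]⟩

/-- Lemma 3.3 of the paper (estimates (int_b), (est|b|), (estb')): the particular
solution `b = -Σ_{k=1}^∞ Q_k` of the Riccati equation satisfies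
`|∫_t^∞ b| ≤ b₀`, `|b(t)| ≤ b₁(1+t)^(-γ)` and `|b'(t)| ≤ b₂(1+t)^(-2β)`. -/
theorem b_estimates
    (T : ℝ) (hT : 0 ≤ T)
    (β γ : ℝ) (hβ : β < 1) (hγ : 0 < γ) (hγβ : β ≤ γ)
    (M : ℝ → ℝ) (hMc : ContinuousOn M (Set.Ici T))
    (q Q : ℕ → ℝ → ℝ)
    (hq1 : ∀ t, q 1 t = M t)
    (hqk : ∀ k, 2 ≤ k → ∀ t, q k t = ∑ j ∈ Finset.Ico 1 k, Q j t * Q (k - j) t)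
    -- `Q k t = -∫_t^∞ q k`, all these improper integrals being convergent
    (hQ : ∀ k, 1 ≤ k → ∀ t ≥ T,
      Tendsto (fun R => ∫ s in t..R, q k s) atTop (𝓝 (-(Q k t))))
    -- `φ t = -∫_t^∞ Q₂`, assumed finite
    (φ : ℝ → ℝ)
    (hφ : ∀ t ≥ T,
      Tendsto (fun R => ∫ s in t..R, Q 2 s) atTop (𝓝 (-(φ t))))
    -- (i): `|∫_t^∞ Q₁| ≤ 1` and `φ(t) ≤ 6⁻⁴` on `[T,∞)`
    (IQ1 : ℝ → ℝ)
    (hIQ1 : ∀ t ≥ T,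
      Tendsto (fun R => ∫ s in t..R, Q 1 s) atTop (𝓝 (IQ1 t)))
    (hIQ1bd : ∀ t ≥ T, |IQ1 t| ≤ 1)
    (hφbd : ∀ t ≥ T, φ t ≤ 1 / 6 ^ 4)
    -- (ii): decay conditions on `M`, `∫_t^∞ M = -Q₁` and `∫_t^∞ (∫_s^∞ M)²`
    (C : ℝ) (hC : 0 < C)
    (hM2 : ∀ t ≥ T, |M t| ≤ C * (1 + t) ^ (-(2 * β)))
    (hM3a : ∀ t ≥ T, |Q 1 t| ≤ C * (1 + t) ^ (-γ))
    (hM3b : ∀ t ≥ T,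
      ∫⁻ s in Set.Ioi t, ENNReal.ofReal (Q 1 s ^ 2)
        ≤ ENNReal.ofReal (C * (1 + t) ^ (-γ)))
    -- `b = -Σ_{k=1}^∞ Q_k`, continuously differentiable and solving the Riccati equation
    (b b' : ℝ → ℝ)
    (hbsum : ∀ t ≥ T, HasSum (fun k : ℕ => Q (k + 1) t) (-(b t)))
    (hbd : ∀ t ∈ Set.Ici T, HasDerivWithinAt b (b' t) (Set.Ici T) t)
    (hb'c : ContinuousOn b' (Set.Ici T))
    (hric : ∀ t ≥ T, b' t + b t ^ 2 + M t = 0) :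
    ∃ b₀ > (0:ℝ), ∃ b₁ > (0:ℝ), ∃ b₂ > (0:ℝ), ∀ t ≥ T,
      (∃ L : ℝ, Tendsto (fun R => ∫ s in t..R, b s) atTop (𝓝 L) ∧ |L| ≤ b₀) ∧
      |b t| ≤ b₁ * (1 + t) ^ (-γ) ∧
      |b' t| ≤ b₂ * (1 + t) ^ (-(2 * β)) :=
  b_estimates_general T hT β γ hγβ M hMc q Q hq1 hqk hQ φ hφ IQ1 hIQ1 hIQ1bd hφbd C hC hM2 hM3a hM3b
    b b' hbsum hbd hric
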